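/- arXiv:1302.0454 — 5 statements merged into one kernel-verified Lean document; each statement's English description precedes it below -/
import Mathlib

section
/- Every left-c.e. set Z is a g-change set for some function g : ℕ → ℕ with g = o(2^n), i.e. lim_{n→∞} g(n)/2^n = 0. -/
/-! Basic definitions: Cantor space, initial segments, computable approximations,
Martin-Löf randomness, change counting, cost functions, oracle computability. -/

/-- The length-`n` initial segment of `Z : ℕ → Bool`, as a list of booleans. -/
def restr (Z : ℕ → Bool) (n : ℕ) : List Bool := (List.range n).map Z

/-- `σ` is an initial segment of `Z`. -/
def InitSeg (σ : List Bool) (Z : ℕ → Bool) : Prop := σ = restr Z σ.length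

/-- `Z` is Martin-Löf random: for every computable sequence of strings with
finite total measure, only finitely many are initial segments of `Z`. -/
def MLRandom (Z : ℕ → Bool) : Prop :=
  ∀ σ : ℕ → List Bool, Computable σ →
    Summable (fun i => ((1 : ℝ) / 2) ^ (σ i).length) →
    {i | InitSeg (σ i) Z}.Finite

/-- `(Zs s) s∈ℕ` converges pointwise to `Z`. -/
def Approx (Zs : ℕ → ℕ → Bool) (Z : ℕ → Bool) : Prop :=
  ∀ x, ∃ t, ∀ s, t ≤ s → Zs s x = Z x

/-- `Zs` is a computable approximation of `Z`. -/
def CompApprox (Zs : ℕ → ℕ → Bool) (Z : ℕ → Bool) : Prop :=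
  Computable₂ Zs ∧ Approx Zs Z

/-- `Z` is Δ⁰₂: it has a computable approximation. -/
def Delta02 (Z : ℕ → Bool) : Prop := ∃ Zs, CompApprox Zs Z

/-- The set of stages `s ≥ 1` at which the length-`n` initial segment of the
approximation changes. -/
def changeStages (Zs : ℕ → ℕ → Bool) (n : ℕ) : Set ℕ :=
  {s | 1 ≤ s ∧ restr (Zs s) n ≠ restr (Zs (s - 1)) n}

/-- `Z` is a `g`-change set. -/
def GChangeSet (Z : ℕ → Bool) (g : ℕ → ℕ) : Prop :=
  ∃ Zs, CompApprox Zs Z ∧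
    ∀ n, (changeStages Zs n).Finite ∧ (changeStages Zs n).ncard ≤ g n

/-- `Z` is ω-c.a.: a `g`-change set for some computable `g`. -/
def OmegaCA (Z : ℕ → Bool) : Prop := ∃ g : ℕ → ℕ, Computable g ∧ GChangeSet Z g

/-- Lexicographic order on Cantor space. -/
def LexLE (X Y : ℕ → Bool) : Prop :=
  X = Y ∨ ∃ n, (∀ i, i < n → X i = Y i) ∧ X n = false ∧ Y n = true

/-- `Z` is left-c.e. -/
def LeftCE (Z : ℕ → Bool) : Prop :=
  ∃ Zs, CompApprox Zs Z ∧ ∀ s, LexLE (Zs s) (Zs (s + 1))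

/-- `c` is a cost function: computable, nonnegative, nondecreasing in the stage,
nonincreasing in the number. -/
def CostFunction (c : ℕ → ℕ → ℚ) : Prop :=
  Computable₂ c ∧ (∀ x s, 0 ≤ c x s) ∧
    (∀ x s t, s ≤ t → c x s ≤ c x t) ∧ (∀ x y s, x ≤ y → c y s ≤ c x s)

/-- The limit condition for a cost function. -/
def LimitCondition (c : ℕ → ℕ → ℚ) : Prop :=
  ∀ ε : ℚ, 0 < ε → ∃ x₀, ∀ x, x₀ ≤ x → ∀ s, c x s ≤ ε

/-- A benign cost function: the number of pairwise disjoint intervals `[x,s)` with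
`c x s ≥ 2^{-k}` is computably bounded in `k`. -/
def Benign (c : ℕ → ℕ → ℚ) : Prop :=
  ∃ b : ℕ → ℕ, Computable b ∧
    ∀ k m (x s : ℕ → ℕ), (∀ i, i < m → x i < s i) →
      (∀ i, i + 1 < m → s i ≤ x (i + 1)) →
      (∀ i, i < m → ((1 : ℚ) / 2) ^ k ≤ c (x i) (s i)) → m ≤ b k

open Classical in
/-- The cost paid at stage `s` by the approximation `As`: if `s ≥ 1` and the
approximation changes at `s`, it is `c x s` where `x` is the least changed number. -/
noncomputable def stageCost (c : ℕ → ℕ → ℚ) (As : ℕ → ℕ → Bool) (s : ℕ) : ℚ :=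
  if s = 0 then 0
  else if h : ∃ x, As s x ≠ As (s - 1) x then c (Nat.find h) s else 0

/-- `A` obeys the cost function `c`: some computable approximation of `A` has
finite total cost. -/
def Obeys (A : ℕ → Bool) (c : ℕ → ℕ → ℚ) : Prop :=
  ∃ As, CompApprox As A ∧ ∃ B : ℚ, ∀ F : Finset ℕ, ∑ s ∈ F, stageCost c As s ≤ B

/-- Functions partial recursive in the oracle `O`. -/
inductive RecIn (O : ℕ →. ℕ) : (ℕ →. ℕ) → Prop
  | oracle : RecIn O O
  | zero : RecIn O (pure 0)
  | succ : RecIn O ↑Nat.succ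
  | left : RecIn O ↑fun n : ℕ => n.unpair.1
  | right : RecIn O ↑fun n : ℕ => n.unpair.2
  | pair {f g} : RecIn O f → RecIn O g → RecIn O fun n => Nat.pair <$> f n <*> g n
  | comp {f g} : RecIn O f → RecIn O g → RecIn O fun n => g n >>= f
  | prec {f g} : RecIn O f → RecIn O g → RecIn O (Nat.unpaired fun a n =>
      n.rec (f a) fun y IH => do let i ← IH; g (Nat.pair a (Nat.pair y i)))
  | rfind {f} : RecIn O f → RecIn O fun a =>
      Nat.rfind fun n => (fun m => m = 0) <$> f (Nat.pair a n)

/-- The characteristic function of `A` as a partial function ℕ →. ℕ. -/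
def charFn (A : ℕ → Bool) : ℕ →. ℕ := fun n => Part.some (cond (A n) 1 0)

/-- Turing reducibility: `A ≤_T Z`. -/
def TuringLE (A Z : ℕ → Bool) : Prop := RecIn (charFn Z) (charFn A)

/-- `A` is computably enumerable: the domain of a partial computable function. -/
def CE (A : ℕ → Bool) : Prop :=
  ∃ f : ℕ →. ℕ, Nat.Partrec f ∧ ∀ x, A x = true ↔ (f x).Dom

/-- A Π⁰₁ class of elements of Cantor space. -/
def Pi01 (P : Set (ℕ → Bool)) : Prop :=
  ∃ f : ℕ → Option (List Bool), Computable f ∧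
    P = {Z | ∀ i σ, f i = some σ → ¬ InitSeg σ Z}

/-- The c.e. set `W_e`: the domain of the `e`-th partial computable function. -/
def Wset (e : ℕ) : Set ℕ :=
  {x | ((Denumerable.ofNat Nat.Partrec.Code e).eval x).Dom}

/-- The stage-`s` approximation to `W_e`, via step-bounded evaluation. -/
def WAt (e s x : ℕ) : Prop :=
  (Nat.Partrec.Code.evaln s (Denumerable.ofNat Nat.Partrec.Code e) x).isSome

/-- `A` is promptly simple. -/
def PromptlySimple (A : ℕ → Bool) : Prop :=
  CE A ∧ {x | A x = false}.Infinite ∧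
    ∃ As : ℕ → ℕ → Bool, Computable₂ As ∧
      (∀ s x, As s x = true → As (s + 1) x = true) ∧
      (∀ x, A x = true ↔ ∃ s, As s x = true) ∧
      ∀ e, (Wset e).Infinite →
        ∃ s x, 1 ≤ s ∧ WAt e s x ∧ ¬ WAt e (s - 1) x ∧ As s x = true

/-!
Read the first `n` bits of the stage-`s` approximation as a binary number. For a left-c.e.
approximation this number is nondecreasing in `s`, so every change of the `n`-prefix raises
it by at least one. Once the first `m` bits have settled at some stage `a`, the value can only
move within a block of `2 ^ (n - m)` numbers, whence at most `a + 2 ^ (n - m)` changes in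
total, and `g n / 2 ^ n ≤ a / 2 ^ n + 2⁻¹ ^ m` for `n ≥ m`.
-/

open Filter Topology

/-- The first `n` bits of `X` read as a binary number, with `X 0` the most significant
digit, so that the lexicographic order on prefixes becomes the order of `ℕ`. -/
def prefixValue (X : ℕ → Bool) : ℕ → ℕ
  | 0 => 0
  | n + 1 => 2 * prefixValue X n + (X n).toNat

lemma prefixValue_congr {X Y : ℕ → Bool} {n : ℕ} (h : ∀ i < n, X i = Y i) :
    prefixValue X n = prefixValue Y n := by
  induction n with
  | zero => rfl
  | succ n ih =>
    simp only [prefixValue, ih fun i hi => h i (by omega), h n n.lt_succ_self]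

lemma eq_of_prefixValue_eq {X Y : ℕ → Bool} {n : ℕ} (h : prefixValue X n = prefixValue Y n) :
    ∀ i < n, X i = Y i := by
  induction n with
  | zero => intro i hi; omega
  | succ n ih =>
    simp only [prefixValue] at h
    have hX := Bool.toNat_le (X n)
    have hY := Bool.toNat_le (Y n)
    intro i hi
    rcases Nat.lt_succ_iff_lt_or_eq.1 hi with hi | rfl
    · exact ih (by omega) i hi
    · have hbit : (X i).toNat = (Y i).toNat := by omega
      revert hbit; cases X i <;> cases Y i <;> simp

lemma restr_eq_of_prefixValue_eq {X Y : ℕ → Bool} {n : ℕ}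
    (h : prefixValue X n = prefixValue Y n) : restr X n = restr Y n := by
  simpa [restr, List.map_inj_left] using eq_of_prefixValue_eq h

lemma prefixValue_mem_Ico {X : ℕ → Bool} {m n : ℕ} (hmn : m ≤ n) :
    prefixValue X n ∈
      Set.Ico (prefixValue X m * 2 ^ (n - m)) ((prefixValue X m + 1) * 2 ^ (n - m)) := by
  induction n, hmn using Nat.le_induction with
  | base => simp
  | succ n hmn ih =>
    rw [Nat.sub_add_comm hmn, pow_succ]
    have := Bool.toNat_le (X n)
    simp only [prefixValue, Set.mem_Ico] at ih ⊢
    constructor <;> nlinarith [ih.1, ih.2]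

lemma prefixValue_lt_add_two_pow {X Y : ℕ → Bool} {m n : ℕ} (hmn : m ≤ n)
    (h : ∀ i < m, X i = Y i) :
    prefixValue Y n < prefixValue X n + 2 ^ (n - m) := by
  have hX := (prefixValue_mem_Ico (X := X) hmn).1
  have hY := (prefixValue_mem_Ico (X := Y) hmn).2
  rw [prefixValue_congr h] at hX
  linarith

lemma LexLE.prefixValue_le {X Y : ℕ → Bool} (h : LexLE X Y) (n : ℕ) :
    prefixValue X n ≤ prefixValue Y n := by
  rcases h with rfl | ⟨p, hag, hX, hY⟩
  · rfl
  rcases le_or_gt n p with hnp | hpn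
  · exact (prefixValue_congr fun i hi => hag i (by omega)).le
  have hp : prefixValue X p = prefixValue Y p := prefixValue_congr hag
  have hX' : prefixValue X (p + 1) = 2 * prefixValue X p := by simp [prefixValue, hX]
  have hY' : prefixValue Y (p + 1) = 2 * prefixValue X p + 1 := by simp [prefixValue, hY, hp]
  have hXn := (prefixValue_mem_Ico (X := X) hpn).2
  have hYn := (prefixValue_mem_Ico (X := Y) hpn).1
  rw [hX'] at hXn
  rw [hY'] at hYn
  omega

def jumpStages {α : Type*} (f : ℕ → α) : Set ℕ := {s | 1 ≤ s ∧ f s ≠ f (s - 1)}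

lemma card_filter_jump_Ioc_le {f : ℕ → ℕ} (hf : Monotone f) {a T : ℕ} (haT : a ≤ T) :
    ((Finset.Ioc a T).filter fun s => f s ≠ f (s - 1)).card ≤ f T - f a := by
  induction T, haT using Nat.le_induction with
  | base => simp
  | succ T haT ih =>
    rw [← Finset.insert_Ioc_right_eq_Ioc_add_one haT, Finset.filter_insert]
    have hT : f T ≤ f (T + 1) := hf T.le_succ
    have ha : f a ≤ f T := hf haT
    split_ifs with hjump
    · have : f T < f (T + 1) := lt_of_le_of_ne hT (Ne.symm hjump)
      grw [Finset.card_insert_le, ih]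
      omega
    · omega

lemma jumpStages_finite_and_ncard_le {f : ℕ → ℕ} (hf : Monotone f) {L : ℕ}
    (hL : ∀ᶠ s in atTop, f s = L) (a : ℕ) :
    (jumpStages f).Finite ∧ (jumpStages f).ncard ≤ a + (L - f a) := by
  obtain ⟨T₀, hT₀⟩ := eventually_atTop.1 hL
  obtain ⟨T, hT₀T, haT⟩ : ∃ T, T₀ ≤ T ∧ a ≤ T :=
    ⟨max T₀ a, le_max_left _ _, le_max_right _ _⟩
  have hsub : jumpStages f ⊆
      ↑(Finset.Icc 1 a ∪ (Finset.Ioc a T).filter fun s => f s ≠ f (s - 1)) := by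
    rintro s ⟨hs1, hjump⟩
    have hsT : s ≤ T := by
      by_contra! hTs
      exact hjump ((hT₀ s (by omega)).trans (hT₀ (s - 1) (by omega)).symm)
    simp only [Finset.coe_union, Finset.coe_Icc, Finset.coe_filter, Finset.mem_Ioc]
    by_cases hsa : s ≤ a
    · exact Or.inl ⟨hs1, hsa⟩
    · exact Or.inr ⟨⟨by omega, hsT⟩, hjump⟩
  refine ⟨(Finset.finite_toSet _).subset hsub, ?_⟩
  calc (jumpStages f).ncard
      ≤ (Finset.Icc 1 a ∪ (Finset.Ioc a T).filter fun s => f s ≠ f (s - 1)).card :=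
        Set.ncard_coe_finset _ ▸ Set.ncard_le_ncard hsub (Finset.finite_toSet _)
    _ ≤ a + (f T - f a) := by
        grw [Finset.card_union_le, Nat.card_Icc, card_filter_jump_Ioc_le hf haT]
        omega
    _ = a + (L - f a) := by rw [hT₀ T hT₀T]

lemma Approx.eventually_forall_lt {Zs : ℕ → ℕ → Bool} {Z : ℕ → Bool} (h : Approx Zs Z)
    (m : ℕ) : ∀ᶠ s in atTop, ∀ i < m, Zs s i = Z i := by
  simpa using
    (eventually_all_finite (Set.finite_lt_nat m)).2 fun i _ => eventually_atTop.2 (h i)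

lemma changeStages_subset_jumpStages (Zs : ℕ → ℕ → Bool) (n : ℕ) :
    changeStages Zs n ⊆ jumpStages fun s => prefixValue (Zs s) n :=
  fun _ ⟨hs, hchange⟩ => ⟨hs, fun h => hchange (restr_eq_of_prefixValue_eq h)⟩

/-- Up to stage `a` the `n`-prefix changes at most `a` times; after that every change
raises its value, which ends at `prefixValue Z n`. -/
lemma changeStages_finite_and_ncard_le {Zs : ℕ → ℕ → Bool} {Z : ℕ → Bool}
    (hlex : ∀ s, LexLE (Zs s) (Zs (s + 1))) (hZ : Approx Zs Z) (n a : ℕ) :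
    (changeStages Zs n).Finite ∧
      (changeStages Zs n).ncard ≤ a + (prefixValue Z n - prefixValue (Zs a) n) := by
  have hmono : Monotone fun s => prefixValue (Zs s) n :=
    monotone_nat_of_le_succ fun s => (hlex s).prefixValue_le n
  have hsettle : ∀ᶠ s in atTop, prefixValue (Zs s) n = prefixValue Z n :=
    (hZ.eventually_forall_lt n).mono fun _ => prefixValue_congr
  obtain ⟨hfin, hcard⟩ := jumpStages_finite_and_ncard_le hmono hsettle a
  have hsub := changeStages_subset_jumpStages Zs n
  exact ⟨hfin.subset hsub, (Set.ncard_le_ncard hsub hfin).trans hcard⟩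

lemma tendsto_div_two_pow_of_le_add_two_pow {g : ℕ → ℕ}
    (hg : ∀ m, ∃ a, ∀ n ≥ m, g n ≤ a + 2 ^ (n - m)) :
    Tendsto (fun n => (g n : ℝ) / 2 ^ n) atTop (𝓝 0) := by
  refine tendsto_order.2 ⟨fun ε hε => Eventually.of_forall fun n => hε.trans_le
    (by positivity), fun ε hε => ?_⟩
  obtain ⟨m, hm⟩ := exists_pow_lt_of_lt_one (half_pos hε) (by norm_num : (2 : ℝ)⁻¹ < 1)
  obtain ⟨a, ha⟩ := hg m
  have hsmall : ∀ᶠ n in atTop, (a : ℝ) * 2⁻¹ ^ n < ε / 2 := by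
    have := (tendsto_pow_atTop_nhds_zero_of_lt_one (by norm_num) (by norm_num :
      (2 : ℝ)⁻¹ < 1)).const_mul (a : ℝ)
    rw [mul_zero] at this
    exact this.eventually (gt_mem_nhds (half_pos hε))
  filter_upwards [hsmall, eventually_ge_atTop m] with n hn hmn
  have hsplit : (2 : ℝ) ^ (n - m) / 2 ^ n = 2⁻¹ ^ m := by
    rw [← pow_sub_mul_pow (2 : ℝ) hmn, inv_pow]
    field_simp
  calc (g n : ℝ) / 2 ^ n ≤ ((a : ℝ) + 2 ^ (n - m)) / 2 ^ n := by
        gcongr; exact_mod_cast ha n hmn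
    _ = a * 2⁻¹ ^ n + 2⁻¹ ^ m := by rw [add_div, hsplit, div_eq_mul_inv, ← inv_pow]
    _ < ε / 2 + ε / 2 := by linarith
    _ = ε := add_halves ε

/-- Every left-c.e. set is a `g`-change set for some `g = o(2^n)`. -/
theorem leftCE_change_bound (Z : ℕ → Bool) (hZ : LeftCE Z) :
    ∃ g : ℕ → ℕ,
      Filter.Tendsto (fun n => (g n : ℝ) / 2 ^ n) Filter.atTop (nhds 0) ∧
      GChangeSet Z g := by
  obtain ⟨Zs, hZs, hlex⟩ := hZ
  have hbound := changeStages_finite_and_ncard_le hlex hZs.2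
  refine ⟨fun n => (changeStages Zs n).ncard, ?_, Zs, hZs,
    fun n => ⟨(hbound n 0).1, le_rfl⟩⟩
  refine tendsto_div_two_pow_of_le_add_two_pow fun m => ?_
  obtain ⟨a, ha⟩ := (hZs.2.eventually_forall_lt m).exists
  exact ⟨a, fun n hmn => (hbound n a).2.trans <| Nat.add_le_add_left
    (Nat.sub_le_iff_le_add'.2 (prefixValue_lt_add_two_pow hmn ha).le) a⟩
end

section
/- Define g : ℕ → ℕ by g(n) = ⌊2^n / log(log n)⌋ (natural logarithm) for n ≥ 16, and g(n) = 2^n for n < 16. Then no Martin-Löf random set is a g-change set. -/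
/-- The change bound `⌊2^n / log log n⌋` (with value `2^n` for `n < 16`). -/
noncomputable def gLogLog : ℕ → ℕ := fun n =>
  if n < 16 then 2 ^ n else ⌊(2 : ℝ) ^ n / Real.log (Real.log n)⌋₊

/-! Along the computable lengths `nₖ = 3^(3^(2^k))` one has `log log nₖ ≥ 2^k`, so the
length-`nₖ` prefix of a `gLogLog`-approximation takes at most `2^(nₖ - k) + 1` values (stage `0`
and the change stages). Enumerating all of them for every `k` is a Solovay test of weight at most
`∑ₖ 2^(1-k) < ∞`, and the last value enumerated for each `k` is the true prefix `Z ↾ nₖ`, so `Z`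
meets the test infinitely often. -/

open Filter

theorem restr_length (Z : ℕ → Bool) (m : ℕ) : (restr Z m).length = m := by
  simp [restr]

theorem restr_succ (Z : ℕ → Bool) (m : ℕ) : restr Z (m + 1) = restr Z m ++ [Z m] := by
  simp [restr, List.range_succ]

theorem summable_bif_const_and_tsum_le {α : Type*} {p : α → Bool} {S : Finset α}
    (hp : ∀ a, p a → a ∈ S) {c : ℝ} (hc : 0 ≤ c) :
    Summable (fun a => bif p a then c else 0) ∧ ∑' a, (bif p a then c else 0) ≤ S.card * c := by
  have hzero : ∀ a ∉ S, (bif p a then c else 0) = 0 := fun a ha => by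
    cases h : p a
    · rfl
    · exact absurd (hp a h) ha
  refine ⟨summable_of_ne_finset_zero hzero, ?_⟩
  rw [tsum_eq_sum hzero, ← nsmul_eq_mul]
  exact Finset.sum_le_card_nsmul _ _ _ fun a _ => by cases p a <;> simp [hc]

section ChangeStages

variable {Zs : ℕ → ℕ → Bool} {Z : ℕ → Bool}

theorem computable₂_restr (hZs : Computable₂ Zs) :
    Computable₂ fun s m => restr (Zs s) m := by
  have hrec : Computable fun p : ℕ × ℕ =>
      Nat.rec (motive := fun _ => List Bool) [] (fun y l => l ++ [Zs p.1 y]) p.2 :=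
    Computable.nat_rec Computable.snd (Computable.const [])
      (Computable.list_concat.comp (Computable.snd.comp Computable.snd)
        (hZs.comp (Computable.fst.comp Computable.fst) (Computable.fst.comp Computable.snd))).to₂
  refine hrec.of_eq fun ⟨s, m⟩ => ?_
  dsimp only
  induction m with
  | zero => rfl
  | succ m ih => rw [restr_succ, ← ih]

theorem Approx.eventually_restr_eq (h : Approx Zs Z)
    (m : ℕ) : ∀ᶠ s in atTop, restr (Zs s) m = restr Z m := by
  have hx : ∀ x ∈ Finset.range m, ∀ᶠ s in atTop, Zs s x = Z x :=
    fun x _ => eventually_atTop.2 (h x)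
  filter_upwards [(Finset.range m).eventually_all.2 hx] with s hs
  exact List.map_congr_left fun x hx => hs x (by simpa using hx)

theorem restr_eq_of_forall_notMem_changeStages {m s₀ : ℕ}
    (h : ∀ s, s₀ < s → s ∉ changeStages Zs m) {s : ℕ} (hs : s₀ ≤ s) :
    restr (Zs s) m = restr (Zs s₀) m := by
  induction s, hs using Nat.le_induction with
  | base => rfl
  | succ s hs ih =>
    rw [← ih]
    by_contra hne
    exact h (s + 1) (by omega) ⟨by omega, hne⟩

def isFreshStage (Zs : ℕ → ℕ → Bool) (m s : ℕ) : Bool :=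
  decide (s = 0) || !decide (restr (Zs s) m = restr (Zs (s - 1)) m)

theorem isFreshStage_iff {m s : ℕ} :
    isFreshStage Zs m s ↔ s ∈ insert 0 (changeStages Zs m) := by
  cases s <;> simp [isFreshStage, changeStages]

theorem exists_isFreshStage_restr_eq (h : Approx Zs Z)
    {m : ℕ} (hfin : (changeStages Zs m).Finite) :
    ∃ s, isFreshStage Zs m s ∧ restr (Zs s) m = restr Z m := by
  set S := insert 0 (changeStages Zs m)
  have hlast : sSup S ∈ S := Nat.sSup_mem (Set.insert_nonempty _ _) (hfin.insert 0).bddAbove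
  have hstable : ∀ s, sSup S < s → s ∉ changeStages Zs m := fun s hs hsC =>
    hs.not_ge (le_csSup (hfin.insert 0).bddAbove (Set.mem_insert_of_mem 0 hsC))
  obtain ⟨s, hs, hge⟩ := ((h.eventually_restr_eq m).and (eventually_ge_atTop (sSup S))).exists
  exact ⟨sSup S, isFreshStage_iff.2 hlast,
    (restr_eq_of_forall_notMem_changeStages hstable hge).symm.trans hs⟩

theorem computable₂_isFreshStage (hZs : Computable₂ Zs) :
    Computable₂ (isFreshStage Zs) := by
  have hcur : Computable fun p : ℕ × ℕ => restr (Zs p.2) p.1 :=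
    (computable₂_restr hZs).comp Computable.snd Computable.fst
  have hprev : Computable fun p : ℕ × ℕ => restr (Zs (p.2 - 1)) p.1 :=
    (computable₂_restr hZs).comp (Primrec.nat_sub.to_comp.comp Computable.snd (Computable.const 1))
      Computable.fst
  have hzero : Computable fun p : ℕ × ℕ => decide (p.2 = 0) :=
    Primrec.eq.decide.to_comp.comp Computable.snd (Computable.const 0)
  have hchange : Computable fun p : ℕ × ℕ =>
      !decide (restr (Zs p.2) p.1 = restr (Zs (p.2 - 1)) p.1) :=
    Primrec.not.to_comp.comp (Primrec.eq.decide.to_comp.comp hcur hprev)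
  exact Primrec.or.to_comp.comp hzero hchange

/-- The index `i` codes the pair `(k, s) = Nat.unpair i`; the padding string enumerated at
non-fresh stages has weight `2⁻ⁱ`, which keeps the test total and of finite weight. -/
def freshPrefixTest (Zs : ℕ → ℕ → Bool) (n : ℕ → ℕ) (i : ℕ) : List Bool :=
  bif isFreshStage Zs (n i.unpair.1) i.unpair.2 then restr (Zs i.unpair.2) (n i.unpair.1)
  else restr (fun _ => true) i

theorem computable_freshPrefixTest (hZs : Computable₂ Zs) {n : ℕ → ℕ}
    (hn : Computable n) : Computable (freshPrefixTest Zs n) :=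
  have hk : Computable fun i : ℕ => n i.unpair.1 := hn.comp (Computable.fst.comp Computable.unpair)
  have hs : Computable fun i : ℕ => i.unpair.2 := Computable.snd.comp Computable.unpair
  Computable.cond ((computable₂_isFreshStage hZs).comp hk hs) ((computable₂_restr hZs).comp hs hk)
    ((computable₂_restr (Computable.const true).to₂).comp
      (Computable.const 0) Computable.id)

theorem summable_freshPrefixTest {n g : ℕ → ℕ}
    (hcount : ∀ m, (changeStages Zs m).Finite ∧ (changeStages Zs m).ncard ≤ g m)
    (hsum : Summable fun k => ((g (n k) : ℝ) + 1) * (1 / 2) ^ n k) :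
    Summable fun i => ((1 : ℝ) / 2) ^ (freshPrefixTest Zs n i).length := by
  let F : ℕ × ℕ → ℝ := fun p => bif isFreshStage Zs (n p.1) p.2 then (1 / 2) ^ n p.1 else 0
  have hF0 : 0 ≤ F := fun p => by
    dsimp only [F]
    cases isFreshStage Zs (n p.1) p.2 <;> simp
  have hrow : ∀ k, Summable (fun s => F (k, s)) ∧
      ∑' s, F (k, s) ≤ ((g (n k) : ℝ) + 1) * (1 / 2) ^ n k := fun k => by
    have hfin := (hcount (n k)).1
    obtain ⟨hsummable, hle⟩ := summable_bif_const_and_tsum_le (S := insert 0 hfin.toFinset)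
      (fun s hs => by simpa using isFreshStage_iff.1 hs) (c := (1 / 2 : ℝ) ^ n k) (by positivity)
    refine ⟨hsummable, hle.trans (mul_le_mul_of_nonneg_right ?_ (by positivity))⟩
    have hcard : (insert 0 hfin.toFinset).card ≤ g (n k) + 1 := by
      grw [Finset.card_insert_le, ← Set.ncard_eq_toFinset_card _ hfin, (hcount (n k)).2]
    exact_mod_cast hcard
  have hF : Summable F := (summable_prod_of_nonneg hF0).2 ⟨fun k => (hrow k).1,
    hsum.of_nonneg_of_le (fun k => tsum_nonneg fun s => hF0 (k, s)) fun k => (hrow k).2⟩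
  refine Summable.of_nonneg_of_le (fun _ => by positivity) (fun i => ?_)
    ((Nat.pairEquiv.symm.summable_iff.2 hF).add summable_geometric_two)
  change _ ≤ F i.unpair + _
  dsimp only [F, freshPrefixTest]
  cases isFreshStage Zs (n i.unpair.1) i.unpair.2 <;> simp [restr_length]

end ChangeStages

theorem GChangeSet.not_mlRandom {Z : ℕ → Bool} {g : ℕ → ℕ} (hZ : GChangeSet Z g) {n : ℕ → ℕ}
    (hn : Computable n) (hsum : Summable fun k => ((g (n k) : ℝ) + 1) * (1 / 2) ^ n k) :
    ¬ MLRandom Z := by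
  obtain ⟨Zs, ⟨hcomp, happrox⟩, hcount⟩ := hZ
  intro hrand
  have hfin := hrand _ (computable_freshPrefixTest hcomp hn) (summable_freshPrefixTest hcount hsum)
  choose s hfresh hs using fun k => exists_isFreshStage_restr_eq happrox (hcount (n k)).1
  refine Set.infinite_of_injective_forall_mem (f := fun k => Nat.pair k (s k))
    (fun a b h => (Nat.pair_eq_pair.1 h).1) (fun k => ?_) hfin
  simp [InitSeg, freshPrefixTest, hfresh k, hs k, restr_length]

def testLength (k : ℕ) : ℕ := 3 ^ 3 ^ 2 ^ k

theorem computable_testLength : Computable testLength :=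
  have hpow : Primrec₂ ((· ^ ·) : ℕ → ℕ → ℕ) := Primrec₂.unpaired'.1 Nat.Primrec.pow
  (hpow.comp (Primrec.const 3) (hpow.comp (Primrec.const 3)
    (hpow.comp (Primrec.const 2) Primrec.id))).to_comp

theorem le_testLength (k : ℕ) : k ≤ testLength k :=
  k.lt_two_pow_self.le.trans <| (Nat.lt_pow_self (by norm_num)).le.trans
    (Nat.pow_le_pow_right (by norm_num) (Nat.lt_pow_self (by norm_num)).le)

theorem cast_le_log_three_pow (m : ℕ) : (m : ℝ) ≤ Real.log (3 ^ m) := by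
  rw [Real.log_pow]
  exact le_mul_of_one_le_right (by positivity) (by linarith [Real.log_three_gt_d9])

theorem two_pow_le_log_log_testLength (k : ℕ) :
    (2 : ℝ) ^ k ≤ Real.log (Real.log (testLength k)) :=
  calc (2 : ℝ) ^ k = ((2 ^ k : ℕ) : ℝ) := by push_cast; rfl
    _ ≤ Real.log (3 ^ 2 ^ k) := cast_le_log_three_pow _
    _ ≤ Real.log (Real.log (testLength k)) := by
      refine Real.log_le_log (by positivity) ?_
      rw [testLength]
      exact_mod_cast cast_le_log_three_pow (3 ^ 2 ^ k)

theorem gLogLog_testLength_le (k : ℕ) :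
    (gLogLog (testLength k) : ℝ) ≤ 2 ^ testLength k / 2 ^ k := by
  have h16 : ¬ testLength k < 16 := by
    have : 3 ^ 3 ≤ testLength k :=
      Nat.pow_le_pow_right (by norm_num) (Nat.le_self_pow (pow_ne_zero _ two_ne_zero) 3)
    omega
  have hlog := two_pow_le_log_log_testLength k
  have hpos : 0 < Real.log (Real.log (testLength k)) :=
    lt_of_lt_of_le (by positivity) hlog
  rw [gLogLog, if_neg h16]
  exact (Nat.floor_le (by positivity)).trans
    (div_le_div_of_nonneg_left (by positivity) (by positivity) hlog)

theorem summable_gLogLog_testLength :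
    Summable fun k => ((gLogLog (testLength k) : ℝ) + 1) * (1 / 2) ^ testLength k := by
  refine Summable.of_nonneg_of_le (fun _ => by positivity) (fun k => ?_)
    (summable_geometric_two.mul_left 2)
  have hhalf : ((1 : ℝ) / 2) ^ testLength k ≤ (1 / 2) ^ k :=
    pow_le_pow_of_le_one (by norm_num) (by norm_num) (le_testLength k)
  calc ((gLogLog (testLength k) : ℝ) + 1) * (1 / 2) ^ testLength k
      ≤ (2 ^ testLength k / 2 ^ k + 1) * (1 / 2) ^ testLength k := by
        gcongr; exact gLogLog_testLength_le k
    _ = (1 / 2) ^ k + (1 / 2) ^ testLength k := by rw [one_div_pow, one_div_pow]; field_simp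
    _ ≤ 2 * (1 / 2) ^ k := by linarith

/-- No Martin-Löf random set is a `⌊2^n / log log n⌋`-change set. -/
theorem no_random_loglog_change_set (Z : ℕ → Bool) (hrand : MLRandom Z) :
    ¬ GChangeSet Z gLogLog :=
  fun hZ => hZ.not_mlRandom computable_testLength summable_gLogLog_testLength hrand
end

section
/- If a Δ⁰₂ set A obeys a cost function c, then for every rational ε > 0, A has a computable approximation whose total cost is at most ε. -/
/-! The stage costs of an approximation with finite total cost form a convergent series of
nonnegative terms, so some tail of it is at most `ε`. Restarting the approximation at the stage
`t` where that tail begins still approximates `A`, and since `c x s` is nondecreasing in `s`, each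
stage `s` of the restarted approximation costs at most what stage `s + t` of the old one cost. -/

section StageCost

variable {c : ℕ → ℕ → ℚ}

lemma stageCost_nonneg (hc0 : ∀ x s, 0 ≤ c x s) (As : ℕ → ℕ → Bool) (s : ℕ) :
    0 ≤ stageCost c As s := by
  unfold stageCost
  split_ifs
  exacts [le_rfl, hc0 _ _, le_rfl]

lemma stageCost_zero (As : ℕ → ℕ → Bool) : stageCost c As 0 = 0 := if_pos rfl

lemma stageCost_succ (As : ℕ → ℕ → Bool) (s : ℕ) :
    stageCost c As (s + 1) =
      open Classical in
      if h : ∃ x, As (s + 1) x ≠ As s x then c (Nat.find h) (s + 1) else 0 :=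
  if_neg s.succ_ne_zero

lemma stageCost_shift_le (hc0 : ∀ x s, 0 ≤ c x s)
    (hmono : ∀ x s t, s ≤ t → c x s ≤ c x t) (As : ℕ → ℕ → Bool) (t s : ℕ) :
    stageCost c (fun u => As (u + t)) s ≤ stageCost c As (s + t) := by
  cases s with
  | zero =>
    rw [stageCost_zero, Nat.zero_add]
    exact stageCost_nonneg hc0 As t
  | succ s =>
    rw [stageCost_succ, Nat.add_right_comm, stageCost_succ]
    split_ifs
    exacts [hmono _ _ _ (by omega), le_rfl]

end StageCost

lemma CompApprox.shift {As : ℕ → ℕ → Bool} {A : ℕ → Bool} (hAs : CompApprox As A) (t : ℕ) :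
    CompApprox (fun s => As (s + t)) A := by
  obtain ⟨hcomp, happrox⟩ := hAs
  refine ⟨hcomp.comp (Primrec.nat_add.comp Primrec.fst (Primrec.const t)).to_comp
    Computable.snd, fun x => ?_⟩
  obtain ⟨s₀, hs₀⟩ := happrox x
  exact ⟨s₀, fun s hs => hs₀ (s + t) (by omega)⟩

lemma exists_forall_sum_add_le {f : ℕ → ℚ} (hf : ∀ s, 0 ≤ f s) {B : ℚ}
    (hB : ∀ F : Finset ℕ, ∑ s ∈ F, f s ≤ B) {ε : ℚ} (hε : 0 < ε) :
    ∃ t, ∀ F : Finset ℕ, ∑ s ∈ F, f (s + t) ≤ ε := by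
  have hf' : ∀ s, (0 : ℝ) ≤ f s := fun s => Rat.cast_nonneg.mpr (hf s)
  have hsum : Summable fun s => (f s : ℝ) :=
    summable_of_sum_le (c := B) hf' fun F => by exact_mod_cast hB F
  obtain ⟨t, ht⟩ := ((tendsto_sum_nat_add fun s => (f s : ℝ)).eventually
    (gt_mem_nhds (by exact_mod_cast hε : (0 : ℝ) < ε))).exists
  refine ⟨t, fun F => ?_⟩
  have hF : ((∑ s ∈ F, f (s + t) : ℚ) : ℝ) ≤ ∑' s, (f (s + t) : ℝ) := by
    push_cast
    exact ((summable_nat_add_iff t).mpr hsum).sum_le_tsum F fun s _ => hf' _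
  exact_mod_cast hF.trans ht.le

theorem obeys_small_cost_general (c : ℕ → ℕ → ℚ) (hc : CostFunction c)
    (A : ℕ → Bool) (hobeys : Obeys A c) :
    ∀ ε : ℚ, 0 < ε →
      ∃ As, CompApprox As A ∧ ∀ F : Finset ℕ, ∑ s ∈ F, stageCost c As s ≤ ε := by
  intro ε hε
  obtain ⟨-, hc0, hmono, -⟩ := hc
  obtain ⟨As, hAs, B, hB⟩ := hobeys
  obtain ⟨t, ht⟩ := exists_forall_sum_add_le (stageCost_nonneg hc0 As) hB hε
  refine ⟨fun s => As (s + t), hAs.shift t, fun F => ?_⟩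
  calc ∑ s ∈ F, stageCost c (fun u => As (u + t)) s
      ≤ ∑ s ∈ F, stageCost c As (s + t) :=
        Finset.sum_le_sum fun s _ => stageCost_shift_le hc0 hmono As t s
    _ ≤ ε := ht F

/-- If a Δ⁰₂ set obeys a cost function, then for every rational `ε > 0`
it has a computable approximation with total cost at most `ε`. -/
theorem obeys_small_cost (c : ℕ → ℕ → ℚ) (hc : CostFunction c)
    (A : ℕ → Bool) (hA : Delta02 A) (hobeys : Obeys A c) :
    ∀ ε : ℚ, 0 < ε →
      ∃ As, CompApprox As A ∧ ∀ F : Finset ℕ, ∑ s ∈ F, stageCost c As s ≤ ε :=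
  obeys_small_cost_general c hc A hobeys
end

section
/- Suppose a Δ⁰₂ set A obeys a cost function c. Then there is a computably enumerable set D such that A ≤_T D and D also obeys c. -/
/-! Let `(A_s)` be an approximation of `A` of finite total cost and let `D` consist of the pairs
`⟨x, i⟩` such that `A_s(x)` changes more than `i` times. Since change counts only grow, `D` is c.e.
From `D` one reads off the total number `n` of changes at `x`, and then searches for the stage at
which the `n`-th change happens: from then on `A_s(x) = A(x)`. The approximation of `D` changes at
`⟨x, i⟩` only when `A_s` changes at `x ≤ ⟨x, i⟩`, so, `c` being nonincreasing in its first argument,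
every stage costs `D` at most what it costs `A`. -/

def changeCount (As : ℕ → ℕ → Bool) (x : ℕ) : ℕ → ℕ
  | 0 => 0
  | t + 1 => changeCount As x t + if As (t + 1) x = As t x then 0 else 1

section changeCount

variable {As : ℕ → ℕ → Bool} {x : ℕ}

theorem changeCount_succ_eq_iff {t : ℕ} :
    changeCount As x (t + 1) = changeCount As x t ↔ As (t + 1) x = As t x := by
  by_cases h : As (t + 1) x = As t x <;> simp [changeCount, h]

theorem changeCount_mono : Monotone (changeCount As x) :=
  monotone_nat_of_le_succ fun _ => Nat.le_add_right _ _

theorem apply_eq_of_changeCount_eq {t s : ℕ} (hts : t ≤ s)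
    (h : changeCount As x s = changeCount As x t) : As s x = As t x := by
  revert h
  induction s, hts using Nat.le_induction with
  | base => exact fun _ => rfl
  | succ s hts ih =>
    intro h
    have hle₁ := changeCount_mono (As := As) (x := x) hts
    have hle₂ := changeCount_mono (As := As) (x := x) (Nat.le_add_right s 1)
    have hstep : changeCount As x (s + 1) = changeCount As x s := by omega
    rw [changeCount_succ_eq_iff.1 hstep, ih (by omega)]

theorem exists_changeCount_max {A : ℕ → Bool} (hA : Approx As A) (x : ℕ) :
    ∃ t, ∀ s, changeCount As x s ≤ changeCount As x t := by
  obtain ⟨t, ht⟩ := hA x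
  have hconst : ∀ s, t ≤ s → changeCount As x s = changeCount As x t := by
    intro s hts
    induction s, hts using Nat.le_induction with
    | base => rfl
    | succ s hts ih => rw [changeCount_succ_eq_iff.2 (by rw [ht s hts, ht (s + 1) (by omega)]), ih]
  refine ⟨t, fun s => ?_⟩
  rcases le_total s t with hst | hts
  · exact changeCount_mono hst
  · exact (hconst s hts).le

theorem apply_eq_of_le_changeCount {A : ℕ → Bool} (hA : Approx As A) {n : ℕ}
    (hmax : ∀ s, changeCount As x s ≤ n) {t : ℕ} (ht : n ≤ changeCount As x t) : As t x = A x := by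
  obtain ⟨u, hu⟩ := hA x
  have hut := changeCount_mono (As := As) (x := x) (le_max_right u t)
  rw [← hu _ (le_max_left u t),
    apply_eq_of_changeCount_eq (As := As) (le_max_right u t) (by have := hmax (max u t); omega)]

theorem computable₂_changeCount (hAs : Computable₂ As) : Computable₂ (changeCount As) := by
  have hstep : Computable₂ fun (p : ℕ × ℕ) (q : ℕ × ℕ) =>
      q.2 + cond (As (q.1 + 1) p.1 == As q.1 p.1) 0 1 :=
    (Primrec.nat_add.to_comp.comp (Computable.snd.comp Computable.snd)
      (Computable.cond
        (Primrec.beq.to_comp.comp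
          (hAs.comp (Computable.succ.comp (Computable.fst.comp Computable.snd))
            (Computable.fst.comp Computable.fst))
          (hAs.comp (Computable.fst.comp Computable.snd) (Computable.fst.comp Computable.fst)))
        (Computable.const 0) (Computable.const 1))).to₂
  refine (Computable.nat_rec Computable.snd (Computable.const 0) hstep).of_eq fun ⟨x, s⟩ => ?_
  induction s with
  | zero => rfl
  | succ s ih =>
    simp only at ih ⊢
    rw [ih, changeCount]
    cases As (s + 1) x <;> cases As s x <;> rfl

end changeCount

open Classical in
noncomputable def enumSet (Ds : ℕ → ℕ → Bool) (z : ℕ) : Bool := decide (∃ s, Ds s z = true)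

theorem enumSet_eq_true_iff {Ds : ℕ → ℕ → Bool} {z : ℕ} :
    enumSet Ds z = true ↔ ∃ s, Ds s z = true := by
  simp [enumSet]

theorem ce_enumSet {Ds : ℕ → ℕ → Bool} (hDs : Computable₂ Ds) : CE (enumSet Ds) := by
  refine ⟨fun z => Nat.rfind (fun s => Part.some (Ds s z) : ℕ →. Bool),
    Partrec.nat_iff.1 (Partrec.rfind (hDs.comp Computable.snd Computable.fst).to₂.partrec₂),
    fun z => enumSet_eq_true_iff.trans (Iff.symm (Nat.rfind_dom.trans ?_))⟩
  simp

theorem approx_enumSet {Ds : ℕ → ℕ → Bool}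
    (hmono : ∀ z t s, t ≤ s → Ds t z = true → Ds s z = true) : Approx Ds (enumSet Ds) := by
  intro z
  by_cases h : ∃ s, Ds s z = true
  · obtain ⟨t, ht⟩ := h
    exact ⟨t, fun s hts => by rw [hmono z t s hts ht, enumSet_eq_true_iff.2 ⟨t, ht⟩]⟩
  · refine ⟨0, fun s _ => ?_⟩
    rw [Bool.eq_false_iff.2 fun hs => h ⟨s, hs⟩, Bool.eq_false_iff.2 (h ∘ enumSet_eq_true_iff.1)]

theorem RecIn.of_partrec {O f : ℕ →. ℕ} (hf : Nat.Partrec f) : RecIn O f := by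
  induction hf with
  | zero => exact .zero
  | succ => exact .succ
  | left => exact .left
  | right => exact .right
  | pair _ _ ihf ihg => exact .pair ihf ihg
  | comp _ _ ihf ihg => exact .comp ihf ihg
  | prec _ _ ihf ihg => exact .prec ihf ihg
  | rfind _ ih => exact .rfind ih

theorem turingLE_of_least_absent {A D : ℕ → Bool} {g : ℕ → ℕ →. Bool} (hg : Partrec₂ g)
    (h : ∀ x, ∃ i, D (Nat.pair x i) = false ∧ (∀ j < i, D (Nat.pair x j) = true) ∧ A x ∈ g x i) :
    TuringLE A D := by
  choose i hiD hmin hA using h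
  have hsearch : ∀ x, (Nat.rfind fun n => (fun m => decide (m = 0)) <$> charFn D (Nat.pair x n))
      = Part.some (i x) := fun x =>
    Part.eq_some_iff.2 (Nat.mem_rfind.2
      ⟨by simp [charFn, hiD x], fun hj => by simp [charFn, hmin x _ hj]⟩)
  have hdecode : Nat.Partrec fun n => (g n.unpair.1 n.unpair.2).map fun b => cond b 1 0 :=
    Partrec.nat_iff.1 <| (hg.comp (Computable.fst.comp Computable.unpair)
      (Computable.snd.comp Computable.unpair)).map
      (Computable.cond Computable.snd (Computable.const 1) (Computable.const 0)).to₂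
  have hred := RecIn.comp (RecIn.of_partrec hdecode)
    (RecIn.pair (RecIn.of_partrec Nat.Partrec.some) (RecIn.rfind (RecIn.oracle (O := charFn D))))
  unfold TuringLE
  refine (funext fun x => ?_ : _ = charFn A) ▸ hred
  rw [hsearch x]
  simp [Part.eq_some_iff.2 (hA x), charFn, Seq.seq]

theorem stageCost_le_of_changes_above {c : ℕ → ℕ → ℚ} (hc₀ : ∀ x s, 0 ≤ c x s)
    (hanti : ∀ x y s, x ≤ y → c y s ≤ c x s) {As Ds : ℕ → ℕ → Bool}
    (h : ∀ s z, Ds (s + 1) z ≠ Ds s z → ∃ x ≤ z, As (s + 1) x ≠ As s x) (s : ℕ) :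
    stageCost c Ds s ≤ stageCost c As s := by
  rcases s with _ | s
  · simp [stageCost]
  simp only [stageCost, Nat.add_one_ne_zero, if_false, Nat.add_one_sub_one]
  by_cases hD : ∃ z, Ds (s + 1) z ≠ Ds s z
  · obtain ⟨x, hxz, hx⟩ := h s _ (Nat.find_spec hD)
    rw [dif_pos hD, dif_pos ⟨x, hx⟩]
    exact hanti _ _ _ ((Nat.find_min' _ hx).trans hxz)
  · rw [dif_neg hD]
    split_ifs
    · exact hc₀ _ _
    · exact le_rfl

def changeSetApprox (As : ℕ → ℕ → Bool) (s z : ℕ) : Bool :=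
  decide (z.unpair.2 < changeCount As z.unpair.1 s)

noncomputable def changeSet (As : ℕ → ℕ → Bool) : ℕ → Bool := enumSet (changeSetApprox As)

section changeSet

variable {As : ℕ → ℕ → Bool}

theorem changeSet_pair_eq_true_iff {x i : ℕ} :
    changeSet As (Nat.pair x i) = true ↔ ∃ s, i < changeCount As x s := by
  simp [changeSet, enumSet_eq_true_iff, changeSetApprox]

theorem computable₂_changeSetApprox (hAs : Computable₂ As) : Computable₂ (changeSetApprox As) :=
  (Primrec.nat_lt.decide.to_comp.comp
    (Computable.snd.comp (Computable.unpair.comp Computable.snd))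
    ((computable₂_changeCount hAs).comp
      (Computable.fst.comp (Computable.unpair.comp Computable.snd)) Computable.fst)).to₂

theorem approx_changeSet : Approx (changeSetApprox As) (changeSet As) :=
  approx_enumSet fun _ _ _ hts => by
    simpa [changeSetApprox] using fun h => h.trans_le (changeCount_mono hts)

theorem exists_change_of_changeSetApprox_change {s z : ℕ}
    (h : changeSetApprox As (s + 1) z ≠ changeSetApprox As s z) : ∃ x ≤ z, As (s + 1) x ≠ As s x :=
  ⟨z.unpair.1, Nat.unpair_left_le z,
    fun hx => h (by simp [changeSetApprox, changeCount_succ_eq_iff.2 hx])⟩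

theorem turingLE_changeSet {A : ℕ → Bool} (hAs : CompApprox As A) :
    TuringLE A (changeSet As) := by
  refine turingLE_of_least_absent (g := fun x n =>
    (Nat.rfind fun s => Part.some (decide (n ≤ changeCount As x s))).map (As · x)) ?_ fun x => ?_
  · exact Partrec.map
      (Partrec.rfind (Primrec.nat_le.decide.to_comp.comp (Computable.snd.comp Computable.fst)
        ((computable₂_changeCount hAs.1).comp (Computable.fst.comp Computable.fst)
          Computable.snd)).to₂.partrec₂)
      (hAs.1.comp Computable.snd (Computable.fst.comp Computable.fst)).to₂
  obtain ⟨t, ht⟩ := exists_changeCount_max hAs.2 x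
  refine ⟨changeCount As x t, ?_, fun j hj => changeSet_pair_eq_true_iff.2 ⟨t, hj⟩, ?_⟩
  · simpa [← Bool.not_eq_true, changeSet_pair_eq_true_iff] using ht
  have hreached : ∃ s, changeCount As x t ≤ changeCount As x s := ⟨t, le_rfl⟩
  refine (Part.mem_map_iff _).2 ⟨Nat.find hreached, Nat.mem_rfind.2 ⟨?_, fun hm => ?_⟩, ?_⟩
  · simpa using Nat.find_spec hreached
  · simpa using Nat.find_min hreached hm
  · exact apply_eq_of_le_changeCount hAs.2 ht (Nat.find_spec hreached)

end changeSet

theorem ce_set_above_obeying_general (c : ℕ → ℕ → ℚ) (hc : CostFunction c)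
    (A : ℕ → Bool) (hobeys : Obeys A c) :
    ∃ D : ℕ → Bool, CE D ∧ TuringLE A D ∧ Obeys D c := by
  obtain ⟨-, hc₀, -, hanti⟩ := hc
  obtain ⟨As, hAs, B, hB⟩ := hobeys
  have hDs := computable₂_changeSetApprox hAs.1
  refine ⟨changeSet As, ce_enumSet hDs, turingLE_changeSet hAs,
    changeSetApprox As, ⟨hDs, approx_changeSet⟩, B, fun F => ?_⟩
  calc ∑ s ∈ F, stageCost c (changeSetApprox As) s
      ≤ ∑ s ∈ F, stageCost c As s :=
        Finset.sum_le_sum fun s _ => stageCost_le_of_changes_above hc₀ hanti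
          (fun _ _ => exists_change_of_changeSetApprox_change) s
    _ ≤ B := hB F

/-- If a Δ⁰₂ set `A` obeys a cost function `c`, then some c.e. set
`D ≥_T A` also obeys `c`. -/
theorem ce_set_above_obeying (c : ℕ → ℕ → ℚ) (hc : CostFunction c)
    (A : ℕ → Bool) (hA : Delta02 A) (hobeys : Obeys A c) :
    ∃ D : ℕ → Bool, CE D ∧ TuringLE A D ∧ Obeys D c :=
  ce_set_above_obeying_general c hc A hobeys
end

section
/- If c is a cost function with c(x,s) ≥ 2^{-x} for all x and s, then no Martin-Löf random Δ⁰₂ set obeys c. -/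
/-! If `Z` obeys `c` via `(Zs s)` with total cost at most `B`, list `Zs s ↾ xₛ` at every stage `s`
whose least change is `xₛ`. As `c xₛ s ≥ 2^{-xₛ}`, these strings have total weight at most `B`: a
Solovay test. A random `Z` is not computable, so changes happen at arbitrarily late stages, and the
last stage changing some `x ≤ x₀` already agrees with `Z` up to `x₀`; hence `Z` meets infinitely
many strings of the test. -/

namespace RandomObeysNoCost

open Finset

@[simp] theorem restr_length (Z : ℕ → Bool) (n : ℕ) : (restr Z n).length = n := by
  simp [restr]

theorem restr_eq_restr_iff {Y Z : ℕ → Bool} {n : ℕ} :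
    restr Y n = restr Z n ↔ ∀ i < n, Y i = Z i := by
  simp [restr, List.map_inj_left]

theorem initSeg_restr_iff {Y Z : ℕ → Bool} {n : ℕ} :
    InitSeg (restr Y n) Z ↔ ∀ i < n, Y i = Z i := by
  rw [InitSeg, restr_length, restr_eq_restr_iff]

theorem computable₂_restr {Zs : ℕ → ℕ → Bool} (h : Computable₂ Zs) :
    Computable₂ fun s n => restr (Zs s) n := by
  refine (Computable.nat_rec Computable.snd (Computable.const ([] : List Bool))
    (Computable.list_concat.comp (Computable.snd.comp Computable.snd)
      (h.comp (Computable.fst.comp Computable.fst)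
        (Computable.fst.comp Computable.snd))).to₂).of_eq ?_
  rintro ⟨s, n⟩
  induction n with
  | zero => rfl
  | succ n ih => simp_all [restr, List.range_succ]

theorem not_mlRandom_of_computable {Z : ℕ → Bool} (hZ : Computable Z) : ¬ MLRandom Z := by
  intro hML
  have hinit := hML (restr Z) ((computable₂_restr (Zs := fun _ => Z)
    (hZ.comp Computable.snd)).comp (Computable.const 0) Computable.id)
    (by simpa using summable_geometric_two)
  simp [InitSeg, Set.infinite_univ.not_finite] at hinit

section LeastChange

variable {Zs : ℕ → ℕ → Bool}

def IsLeastChange (Zs : ℕ → ℕ → Bool) (s n : ℕ) : Bool :=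
  (s != 0) && decide (restr (Zs s) n = restr (Zs (s - 1)) n) && !decide (Zs s n = Zs (s - 1) n)

theorem isLeastChange_iff {s n : ℕ} :
    IsLeastChange Zs s n = true ↔
      s ≠ 0 ∧ (∀ i < n, Zs s i = Zs (s - 1) i) ∧ Zs s n ≠ Zs (s - 1) n := by
  simp [IsLeastChange, restr_eq_restr_iff, and_assoc]

theorem computable_isLeastChange (h : Computable₂ Zs) : Computable₂ (IsLeastChange Zs) := by
  have hprev : Computable fun p : ℕ × ℕ => p.1 - 1 :=
    Primrec.nat_sub.to_comp.comp Computable.fst (Computable.const 1)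
  have hpos : Computable fun p : ℕ × ℕ => p.1 != 0 :=
    Primrec.not.to_comp.comp (Primrec.beq.to_comp.comp Computable.fst (Computable.const 0))
  have hr := computable₂_restr h
  have hagree : Computable fun p : ℕ × ℕ =>
      decide (restr (Zs p.1) p.2 = restr (Zs (p.1 - 1)) p.2) :=
    Primrec.eq.decide.to_comp.comp hr (hr.comp hprev Computable.snd)
  have hsame : Computable fun p : ℕ × ℕ => decide (Zs p.1 p.2 = Zs (p.1 - 1) p.2) :=
    Primrec.eq.decide.to_comp.comp h (h.comp hprev Computable.snd)
  exact Primrec.and.to_comp.comp (Primrec.and.to_comp.comp hpos hagree)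
    (Primrec.not.to_comp.comp hsame)

theorem exists_isLeastChange_le {s x : ℕ} (hs : s ≠ 0) (hx : Zs s x ≠ Zs (s - 1) x) :
    ∃ n ≤ x, IsLeastChange Zs s n = true := by
  classical
  have hex : ∃ y, Zs s y ≠ Zs (s - 1) y := ⟨x, hx⟩
  refine ⟨Nat.find hex, Nat.find_min' hex hx,
    isLeastChange_iff.2 ⟨hs, fun i hi => ?_, Nat.find_spec hex⟩⟩
  simpa using Nat.find_min hex hi

theorem isLeastChange_unique {s n n' : ℕ} (h : IsLeastChange Zs s n = true)
    (h' : IsLeastChange Zs s n' = true) : n = n' := by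
  rw [isLeastChange_iff] at h h'
  by_contra hne
  rcases Nat.lt_or_gt_of_ne hne with hlt | hlt
  · exact h.2.2 (h'.2.1 n hlt)
  · exact h'.2.2 (h.2.1 n' hlt)

theorem stageCost_eq_of_isLeastChange (c : ℕ → ℕ → ℚ) {s n : ℕ}
    (h : IsLeastChange Zs s n = true) : stageCost c Zs s = c n s := by
  classical
  obtain ⟨hs, hbelow, hn⟩ := isLeastChange_iff.1 h
  have hex : ∃ y, Zs s y ≠ Zs (s - 1) y := ⟨n, hn⟩
  rw [stageCost, if_neg hs, dif_pos hex]
  congr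
  exact (Nat.find_eq_iff hex).2 ⟨hn, fun i hi => not_not.2 (hbelow i hi)⟩

end LeastChange

section ChangeTest

variable {Zs : ℕ → ℕ → Bool}

/-- Index `Nat.pair s n` carries `Zs s ↾ n` when `n` is the least change at stage `s`; every other
index `i` carries an arbitrary string of length `i`, so that its weight stays summable. -/
def changeTest (Zs : ℕ → ℕ → Bool) (i : ℕ) : List Bool :=
  cond (IsLeastChange Zs i.unpair.1 i.unpair.2) (restr (Zs i.unpair.1) i.unpair.2)
    (restr (Zs 0) i)

theorem computable_changeTest (h : Computable₂ Zs) : Computable (changeTest Zs) := by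
  have hs : Computable fun i : ℕ => i.unpair.1 := Computable.fst.comp Computable.unpair
  have hn : Computable fun i : ℕ => i.unpair.2 := Computable.snd.comp Computable.unpair
  exact Computable.cond ((computable_isLeastChange h).comp hs hn)
    ((computable₂_restr h).comp hs hn)
    ((computable₂_restr h).comp (Computable.const 0) Computable.id)

theorem sum_filter_isLeastChange_le {c : ℕ → ℕ → ℚ} (hbig : ∀ x s, ((1 : ℚ) / 2) ^ x ≤ c x s)
    {B : ℚ} (hB : ∀ F : Finset ℕ, ∑ s ∈ F, stageCost c Zs s ≤ B) (F : Finset ℕ) :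
    ∑ i ∈ F with IsLeastChange Zs i.unpair.1 i.unpair.2, ((1 : ℝ) / 2) ^ i.unpair.2 ≤ B := by
  set G := F.filter fun i => IsLeastChange Zs i.unpair.1 i.unpair.2
  have hinj : Set.InjOn (fun i : ℕ => i.unpair.1) G := by
    intro i hi j hj (hij : i.unpair.1 = j.unpair.1)
    have hj' := (mem_filter.1 hj).2
    rw [← hij] at hj'
    have hn := isLeastChange_unique (mem_filter.1 hi).2 hj'
    rw [← Nat.pair_unpair i, ← Nat.pair_unpair j]
    exact congrArg₂ Nat.pair hij hn
  calc ∑ i ∈ G, ((1 : ℝ) / 2) ^ i.unpair.2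
      ≤ ∑ i ∈ G, (stageCost c Zs i.unpair.1 : ℝ) := by
        refine sum_le_sum fun i hi => ?_
        rw [stageCost_eq_of_isLeastChange c (mem_filter.1 hi).2]
        have hcast := (Rat.cast_le (K := ℝ)).2 (hbig i.unpair.2 i.unpair.1)
        push_cast at hcast
        exact hcast
    _ = ((∑ s ∈ G.image fun i => i.unpair.1, stageCost c Zs s : ℚ) : ℝ) := by
        rw [sum_image hinj]; push_cast; rfl
    _ ≤ B := by exact_mod_cast hB _

theorem summable_changeTest {c : ℕ → ℕ → ℚ} (hbig : ∀ x s, ((1 : ℚ) / 2) ^ x ≤ c x s)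
    {B : ℚ} (hB : ∀ F : Finset ℕ, ∑ s ∈ F, stageCost c Zs s ≤ B) :
    Summable fun i => ((1 : ℝ) / 2) ^ (changeTest Zs i).length := by
  have hweight : Summable fun i : ℕ =>
      if IsLeastChange Zs i.unpair.1 i.unpair.2 then ((1 : ℝ) / 2) ^ i.unpair.2 else 0 :=
    summable_of_sum_le (fun i => by positivity) fun F => by
      rw [← sum_filter]; exact sum_filter_isLeastChange_le hbig hB F
  refine (hweight.add summable_geometric_two).of_nonneg_of_le (fun _ => by positivity) fun i => ?_
  cases h : IsLeastChange Zs i.unpair.1 i.unpair.2 <;> simp [changeTest, h]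

end ChangeTest

section Capture

variable {Zs : ℕ → ℕ → Bool} {Z : ℕ → Bool}

theorem exists_forall_le_eq_of_approx (h : Approx Zs Z) (m : ℕ) :
    ∃ T, ∀ s ≥ T, ∀ x ≤ m, Zs s x = Z x := by
  have hev : ∀ᶠ s in Filter.atTop, ∀ x ∈ Set.Iic m, Zs s x = Z x :=
    (Set.finite_Iic m).eventually_all.2 fun x _ => Filter.eventually_atTop.2 (h x)
  simpa using Filter.eventually_atTop.1 hev

theorem exists_change_gt (hZs : Computable₂ Zs) (h : Approx Zs Z) (hZ : ¬ Computable Z)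
    (T : ℕ) : ∃ s > T, ∃ x, Zs s x ≠ Zs (s - 1) x := by
  by_contra! hconst
  have hstable : ∀ s ≥ T, Zs s = Zs T := by
    intro s hs
    induction s, hs using Nat.le_induction with
    | base => rfl
    | succ s hs ih => exact funext fun x => by simpa [ih] using hconst (s + 1) (by omega) x
  have hZT : Zs T = Z := funext fun x => by
    obtain ⟨t, ht⟩ := h x
    rw [← ht (max t T) (le_max_left _ _), hstable _ (le_max_right _ _)]
  exact hZ (hZT ▸ hZs.comp (Computable.const T) Computable.id)

theorem exists_change_le_agreeing_with_limit (h : Approx Zs Z) {s₀ x₀ : ℕ} (hs₀ : s₀ ≠ 0)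
    (hx₀ : Zs s₀ x₀ ≠ Zs (s₀ - 1) x₀) :
    ∃ s ≥ s₀, s ≠ 0 ∧ (∃ x ≤ x₀, Zs s x ≠ Zs (s - 1) x) ∧ ∀ x ≤ x₀, Zs s x = Z x := by
  classical
  obtain ⟨T, hT⟩ := exists_forall_le_eq_of_approx h x₀
  set P : ℕ → Prop := fun s => s ≠ 0 ∧ ∃ x ≤ x₀, Zs s x ≠ Zs (s - 1) x
  -- the witness is the last stage changing some `x ≤ x₀`; by convergence no such stage exceeds `T`
  have hPT : ∀ s, P s → s ≤ T := by
    rintro s ⟨-, x, hx, hne⟩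
    by_contra! hlt
    exact hne ((hT s hlt.le x hx).trans (hT (s - 1) (by omega) x hx).symm)
  have hP₀ : P s₀ := ⟨hs₀, x₀, le_rfl, hx₀⟩
  have hP₁ : P (Nat.findGreatest P T) := Nat.findGreatest_spec (hPT s₀ hP₀) hP₀
  set s₁ := Nat.findGreatest P T
  have hstable : ∀ s ≥ s₁, ∀ x ≤ x₀, Zs s x = Zs s₁ x := by
    intro s hs
    induction s, hs using Nat.le_induction with
    | base => exact fun _ _ => rfl
    | succ s hs ih =>
      intro x hx
      rw [← ih x hx]
      by_contra hne
      have hP : P (s + 1) := ⟨s.succ_ne_zero, x, hx, by simpa using hne⟩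
      exact Nat.findGreatest_is_greatest (by omega) (hPT _ hP) hP
  refine ⟨s₁, Nat.le_findGreatest (hPT s₀ hP₀) hP₀, hP₁.1, hP₁.2, fun x hx => ?_⟩
  rw [← hstable (max s₁ T) (le_max_left _ _) x hx, hT _ (le_max_right _ _) x hx]

theorem exists_initSeg_changeTest (h : Approx Zs Z) {s₀ x₀ : ℕ} (hs₀ : s₀ ≠ 0)
    (hx₀ : Zs s₀ x₀ ≠ Zs (s₀ - 1) x₀) : ∃ i ≥ s₀, InitSeg (changeTest Zs i) Z := by
  obtain ⟨s, hs, hs0, ⟨x, hx, hne⟩, hagree⟩ := exists_change_le_agreeing_with_limit h hs₀ hx₀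
  obtain ⟨n, hn, hleast⟩ := exists_isLeastChange_le hs0 hne
  refine ⟨Nat.pair s n, hs.trans (Nat.left_le_pair s n), ?_⟩
  rw [changeTest, Nat.unpair_pair, hleast, cond_true, initSeg_restr_iff]
  exact fun i hi => hagree i (by omega)

theorem infinite_initSeg_changeTest (hZs : Computable₂ Zs) (h : Approx Zs Z)
    (hZ : ¬ Computable Z) : {i | InitSeg (changeTest Zs i) Z}.Infinite :=
  Set.infinite_of_forall_exists_gt fun N => by
    obtain ⟨s, hs, x, hx⟩ := exists_change_gt hZs h hZ N
    obtain ⟨i, hi, hinit⟩ := exists_initSeg_changeTest h (by omega) hx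
    exact ⟨i, hinit, by omega⟩

end Capture

end RandomObeysNoCost

theorem random_obeys_no_cost_general (c : ℕ → ℕ → ℚ)
    (hbig : ∀ x s, ((1 : ℚ) / 2) ^ x ≤ c x s) :
    ∀ Z : ℕ → Bool, MLRandom Z → Delta02 Z → ¬ Obeys Z c := by
  rintro Z hML - ⟨Zs, ⟨hZs, hlim⟩, B, hB⟩
  have hZ : ¬ Computable Z := fun h => RandomObeysNoCost.not_mlRandom_of_computable h hML
  exact RandomObeysNoCost.infinite_initSeg_changeTest hZs hlim hZ
    (hML _ (RandomObeysNoCost.computable_changeTest hZs)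
      (RandomObeysNoCost.summable_changeTest hbig hB))

/-- If `c(x,s) ≥ 2^{-x}` for all `x, s`, then no ML-random Δ⁰₂ set
obeys `c`. -/
theorem random_obeys_no_cost (c : ℕ → ℕ → ℚ) (hc : CostFunction c)
    (hbig : ∀ x s, ((1 : ℚ) / 2) ^ x ≤ c x s) :
    ∀ Z : ℕ → Bool, MLRandom Z → Delta02 Z → ¬ Obeys Z c :=
  random_obeys_no_cost_general c hbig
end
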